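/- arXiv:2207.04485 — 5 statements merged into one kernel-verified Lean document; each statement's English description precedes it below -/
import Mathlib

section
/- Let d ≥ 1, s ≤ 0, σ ∈ ℝ, ε₀ > 0, and let φ be a Schwartz function on ℝ^d whose Fourier transform is supported in {ξ ∈ ℝ^d : |ξ|₁ ≥ ε₀}, where |ξ|₁ = |ξ₁| + … + |ξ_d|. For λ > 1 let D_λφ(x) := φ(λx). Then: if σ ≤ 0, ‖D_λφ‖_{E^s_σ} ≤ λ^{−d/2} 2^{s(λ−1)ε₀} ‖φ‖_{E^s_σ}; and if σ > 0, ‖D_λφ‖_{E^s_σ} ≤ λ^{−d/2+σ} 2^{s(λ−1)ε₀} ‖φ‖_{E^s_σ}. -/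
open MeasureTheory Real FourierTransform

/-- The `E^s_σ` norm on `ℝ^d`:
`‖φ‖_{E^s_σ} = (∫ ⟨ξ⟩^{2σ} 2^{2s|ξ|₁} |𝓕φ(ξ)|² dξ)^{1/2}`, where `|ξ|₁ = ∑ |ξᵢ|`
and `⟨ξ⟩^{2σ} = (1+‖ξ‖²)^σ`. -/
noncomputable def Enorm (d : ℕ) (s σ : ℝ) (f : EuclideanSpace ℝ (Fin d) → ℂ) : ℝ :=
  (∫ ξ : EuclideanSpace ℝ (Fin d),
    (1 + ‖ξ‖ ^ 2) ^ σ * (2 : ℝ) ^ (2 * s * ∑ i, |ξ i|) * ‖𝓕 f ξ‖ ^ 2) ^ (1 / 2 : ℝ)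

/-!
The Fourier transform of `D_λφ` is `λ^{-d} 𝓕φ(·/λ)`, so the substitution `ξ = λη` turns
`‖D_λφ‖²` into `λ^{-d} ∫ w(λη) |𝓕φ(η)|² dη`, where `w` is the weight of the `E^s_σ` norm.
On the support of `𝓕φ` we have `|λη|₁ ≥ |η|₁ + (λ-1)ε₀`, so since `s ≤ 0` the exponential factor
of `w` gains `2^{2s(λ-1)ε₀}`, while the polynomial factor grows at most by `λ^{2 max(σ, 0)}`.
Taking square roots gives both estimates.
-/

section
variable {V E : Type*} [NormedAddCommGroup V] [InnerProductSpace ℝ V] [FiniteDimensional ℝ V]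
  [MeasurableSpace V] [BorelSpace V] [NormedAddCommGroup E] [NormedSpace ℂ E]

open scoped RealInnerProductSpace in
theorem fourier_comp_smul (f : V → E) {lam : ℝ} (hlam : 0 < lam) (ξ : V) :
    𝓕 (fun x => f (lam • x)) ξ = (lam ^ Module.finrank ℝ V)⁻¹ • 𝓕 f (lam⁻¹ • ξ) := by
  simp only [Real.fourier_eq]
  have h := Measure.integral_comp_smul volume (fun y => 𝐞 (-⟪y, lam⁻¹ • ξ⟫) • f y) lam
  simp only [real_inner_smul_left, real_inner_smul_right, ← mul_assoc,
    inv_mul_cancel₀ hlam.ne', one_mul] at h ⊢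
  rw [h, abs_of_pos (by positivity)]

theorem integral_mul_norm_sq_fourier_comp_smul (w : V → ℝ) (f : V → E) {lam : ℝ}
    (hlam : 0 < lam) :
    ∫ ξ, w ξ * ‖𝓕 (fun x => f (lam • x)) ξ‖ ^ 2 =
      (lam ^ Module.finrank ℝ V)⁻¹ * ∫ η, w (lam • η) * ‖𝓕 f η‖ ^ 2 := by
  have h := Measure.integral_comp_inv_smul_of_nonneg volume
    (fun η => w (lam • η) * ‖𝓕 f η‖ ^ 2) hlam.le
  simp only [smul_inv_smul₀ hlam.ne', smul_eq_mul] at h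
  simp only [fourier_comp_smul f hlam, norm_smul, mul_pow, Real.norm_eq_abs,
    abs_of_pos (inv_pos.2 (pow_pos hlam _)), mul_left_comm (w _), integral_const_mul, h]
  field_simp

theorem SchwartzMap.integrable_one_add_norm_sq_rpow_mul_norm_sq (g : SchwartzMap V E) (σ : ℝ) :
    Integrable (fun ξ => (1 + ‖ξ‖ ^ 2) ^ σ * ‖g ξ‖ ^ 2) := by
  have hw := Function.hasTemperateGrowth_one_add_norm_sq_rpow V σ
  have h := (SchwartzMap.smulLeftCLM (𝕜 := ℝ) E (fun ξ : V => (1 + ‖ξ‖ ^ 2) ^ σ) g).integrable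
    (μ := volume)
  refine (h.norm.mul_bdd (c := SchwartzMap.seminorm ℝ 0 0 g)
    g.continuous.norm.aestronglyMeasurable (Filter.Eventually.of_forall fun ξ => ?_)).congr
    (Filter.Eventually.of_forall fun ξ => ?_)
  · simpa using SchwartzMap.norm_le_seminorm ℝ g ξ
  · simp only [SchwartzMap.smulLeftCLM_apply_apply hw, norm_smul, Real.norm_eq_abs,
      abs_of_nonneg (by positivity : (0 : ℝ) ≤ (1 + ‖ξ‖ ^ 2) ^ σ)]
    ring
end

noncomputable def Eweight (d : ℕ) (s σ : ℝ) (ξ : EuclideanSpace ℝ (Fin d)) : ℝ :=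
  (1 + ‖ξ‖ ^ 2) ^ σ * (2 : ℝ) ^ (2 * s * ∑ i, |ξ i|)

theorem Eweight_nonneg (d : ℕ) (s σ : ℝ) (ξ : EuclideanSpace ℝ (Fin d)) :
    0 ≤ Eweight d s σ ξ := by
  unfold Eweight; positivity

theorem Enorm_eq (d : ℕ) (s σ : ℝ) (f : EuclideanSpace ℝ (Fin d) → ℂ) :
    Enorm d s σ f = (∫ ξ, Eweight d s σ ξ * ‖𝓕 f ξ‖ ^ 2) ^ (1 / 2 : ℝ) := rfl

theorem one_add_sq_mul_rpow_le {σ lam t : ℝ} (hlam : 1 ≤ lam) (ht : 0 ≤ t) :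
    (1 + lam ^ 2 * t) ^ σ ≤ lam ^ (2 * max σ 0) * (1 + t) ^ σ := by
  rcases le_total σ 0 with hσ | hσ
  · rw [max_eq_right hσ, mul_zero, rpow_zero, one_mul]
    exact rpow_le_rpow_of_nonpos (by positivity) (by nlinarith [one_le_pow₀ (n := 2) hlam]) hσ
  · rw [max_eq_left hσ, rpow_mul (by positivity), rpow_two,
      ← mul_rpow (by positivity) (by positivity)]
    exact rpow_le_rpow (by positivity) (by nlinarith [one_le_pow₀ (n := 2) hlam]) hσ

theorem EuclideanSpace.sum_abs_smul {d : ℕ} (c : ℝ) (ξ : EuclideanSpace ℝ (Fin d)) :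
    ∑ i, |(c • ξ) i| = |c| * ∑ i, |ξ i| := by
  simp [Finset.mul_sum, abs_mul]

theorem Eweight_smul_le {d : ℕ} {s σ ε₀ lam : ℝ} (hs : s ≤ 0) (hlam : 1 ≤ lam)
    {ξ : EuclideanSpace ℝ (Fin d)} (hξ : ε₀ ≤ ∑ i, |ξ i|) :
    Eweight d s σ (lam • ξ) ≤
      lam ^ (2 * max σ 0) * 2 ^ (2 * s * (lam - 1) * ε₀) * Eweight d s σ ξ := by
  have hlam0 : 0 ≤ lam := by linarith
  have hpoly : (1 + ‖lam • ξ‖ ^ 2) ^ σ ≤ lam ^ (2 * max σ 0) * (1 + ‖ξ‖ ^ 2) ^ σ := by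
    rw [norm_smul, norm_of_nonneg hlam0, mul_pow]
    exact one_add_sq_mul_rpow_le hlam (by positivity)
  have hexp : (2 : ℝ) ^ (2 * s * ∑ i, |(lam • ξ) i|) ≤
      2 ^ (2 * s * (lam - 1) * ε₀) * 2 ^ (2 * s * ∑ i, |ξ i|) := by
    rw [EuclideanSpace.sum_abs_smul, abs_of_nonneg hlam0, ← rpow_add two_pos]
    refine rpow_le_rpow_of_exponent_le one_le_two ?_
    nlinarith [mul_le_mul_of_nonpos_left hξ (by nlinarith : 2 * s * (lam - 1) ≤ 0)]
  calc Eweight d s σ (lam • ξ)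
      ≤ (lam ^ (2 * max σ 0) * (1 + ‖ξ‖ ^ 2) ^ σ) *
          (2 ^ (2 * s * (lam - 1) * ε₀) * 2 ^ (2 * s * ∑ i, |ξ i|)) :=
        mul_le_mul hpoly hexp (by positivity) (by positivity)
    _ = _ := by unfold Eweight; ring

theorem Eweight_le_one_add_norm_sq_rpow {d : ℕ} {s : ℝ} (σ : ℝ) (hs : s ≤ 0)
    (ξ : EuclideanSpace ℝ (Fin d)) :
    Eweight d s σ ξ ≤ (1 + ‖ξ‖ ^ 2) ^ σ := by
  refine mul_le_of_le_one_right (by positivity) (rpow_le_one_of_one_le_of_nonpos one_le_two ?_)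
  exact mul_nonpos_of_nonpos_of_nonneg (by linarith) (by positivity)

theorem continuous_Eweight (d : ℕ) (s σ : ℝ) : Continuous (Eweight d s σ) := by
  refine .mul (.rpow_const (by fun_prop) fun _ => Or.inl (by positivity)) ?_
  exact continuous_const.rpow (by fun_prop) fun _ => Or.inl two_ne_zero

theorem SchwartzMap.integrable_Eweight_mul_norm_sq {d : ℕ} {s : ℝ} (σ : ℝ) (hs : s ≤ 0)
    (g : SchwartzMap (EuclideanSpace ℝ (Fin d)) ℂ) :
    Integrable (fun ξ => Eweight d s σ ξ * ‖g ξ‖ ^ 2) := by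
  refine (g.integrable_one_add_norm_sq_rpow_mul_norm_sq σ).mono'
    ((continuous_Eweight d s σ).mul (g.continuous.norm.pow 2)).aestronglyMeasurable
    (Filter.Eventually.of_forall fun ξ => ?_)
  rw [norm_of_nonneg (mul_nonneg (Eweight_nonneg d s σ ξ) (by positivity))]
  exact mul_le_mul_of_nonneg_right (Eweight_le_one_add_norm_sq_rpow σ hs ξ) (by positivity)

theorem integral_Eweight_smul_mul_norm_sq_le {d : ℕ} {s σ ε₀ : ℝ} (hs : s ≤ 0)
    (φ : SchwartzMap (EuclideanSpace ℝ (Fin d)) ℂ)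
    (hsupp : Function.support (𝓕 ⇑φ) ⊆ {ξ : EuclideanSpace ℝ (Fin d) | ε₀ ≤ ∑ i, |ξ i|})
    {lam : ℝ} (hlam : 1 ≤ lam) :
    ∫ η, Eweight d s σ (lam • η) * ‖𝓕 ⇑φ η‖ ^ 2 ≤
      lam ^ (2 * max σ 0) * 2 ^ (2 * s * (lam - 1) * ε₀) *
        ∫ η, Eweight d s σ η * ‖𝓕 ⇑φ η‖ ^ 2 := by
  rw [← integral_const_mul]
  refine integral_mono_of_nonneg (Filter.Eventually.of_forall fun η => ?_)
    ((SchwartzMap.integrable_Eweight_mul_norm_sq σ hs (𝓕 φ)).const_mul _)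
    (Filter.Eventually.of_forall fun η => ?_)
  · exact mul_nonneg (Eweight_nonneg d s σ _) (by positivity)
  · by_cases hη : 𝓕 ⇑φ η = 0
    · simp [hη]
    · dsimp only
      rw [← mul_assoc]
      exact mul_le_mul_of_nonneg_right (Eweight_smul_le hs hlam (hsupp hη)) (by positivity)

theorem Enorm_comp_smul_le {d : ℕ} {s σ ε₀ : ℝ} (hs : s ≤ 0)
    (φ : SchwartzMap (EuclideanSpace ℝ (Fin d)) ℂ)
    (hsupp : Function.support (𝓕 ⇑φ) ⊆ {ξ : EuclideanSpace ℝ (Fin d) | ε₀ ≤ ∑ i, |ξ i|})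
    {lam : ℝ} (hlam : 1 ≤ lam) :
    Enorm d s σ (fun x => φ (lam • x)) ≤
      lam ^ (-(d : ℝ) / 2 + max σ 0) * 2 ^ (s * (lam - 1) * ε₀) * Enorm d s σ ⇑φ := by
  have hlam0 : 0 < lam := by linarith
  set C := lam ^ (-(d : ℝ) / 2 + max σ 0) * (2 : ℝ) ^ (s * (lam - 1) * ε₀)
  have hC : (lam ^ d)⁻¹ * (lam ^ (2 * max σ 0) * 2 ^ (2 * s * (lam - 1) * ε₀)) = C ^ 2 := by
    simp only [C, mul_pow, ← rpow_mul_natCast hlam0.le, ← rpow_mul_natCast zero_le_two,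
      ← rpow_natCast lam d, ← rpow_neg hlam0.le, ← mul_assoc, ← rpow_add hlam0]
    ring_nf
  have hmono := integral_Eweight_smul_mul_norm_sq_le (σ := σ) hs φ hsupp hlam
  rw [Enorm_eq, Enorm_eq, integral_mul_norm_sq_fourier_comp_smul _ _ hlam0,
    finrank_euclideanSpace_fin]
  have hI : 0 ≤ ∫ η, Eweight d s σ η * ‖𝓕 ⇑φ η‖ ^ 2 :=
    integral_nonneg fun η => mul_nonneg (Eweight_nonneg d s σ η) (by positivity)
  have hJ : 0 ≤ ∫ η, Eweight d s σ (lam • η) * ‖𝓕 ⇑φ η‖ ^ 2 :=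
    integral_nonneg fun η => mul_nonneg (Eweight_nonneg d s σ _) (by positivity)
  calc _ ≤ (C ^ 2 * ∫ η, Eweight d s σ η * ‖𝓕 ⇑φ η‖ ^ 2) ^ (1 / 2 : ℝ) := by
        rw [← hC, mul_assoc]
        exact rpow_le_rpow (mul_nonneg (by positivity) hJ)
          (mul_le_mul_of_nonneg_left hmono (by positivity)) (by norm_num)
    _ = C * (∫ η, Eweight d s σ η * ‖𝓕 ⇑φ η‖ ^ 2) ^ (1 / 2 : ℝ) := by
        rw [mul_rpow (by positivity) hI, ← rpow_natCast, ← rpow_mul (by positivity)]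
        norm_num

theorem stmt_1_general (d : ℕ) (s σ ε₀ : ℝ) (hs : s ≤ 0)
    (φ : SchwartzMap (EuclideanSpace ℝ (Fin d)) ℂ)
    (hsupp : Function.support (𝓕 ⇑φ) ⊆ {ξ : EuclideanSpace ℝ (Fin d) | ε₀ ≤ ∑ i, |ξ i|})
    (lam : ℝ) (hlam : 1 < lam) :
    (σ ≤ 0 → Enorm d s σ (fun x => φ (lam • x)) ≤
      lam ^ (-(d : ℝ) / 2) * (2 : ℝ) ^ (s * (lam - 1) * ε₀) * Enorm d s σ ⇑φ) ∧
    (0 < σ → Enorm d s σ (fun x => φ (lam • x)) ≤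
      lam ^ (-(d : ℝ) / 2 + σ) * (2 : ℝ) ^ (s * (lam - 1) * ε₀) * Enorm d s σ ⇑φ) := by
  have h := Enorm_comp_smul_le (σ := σ) hs φ hsupp hlam.le
  refine ⟨fun hσ => ?_, fun hσ => ?_⟩
  · rwa [max_eq_right hσ, add_zero] at h
  · rwa [max_eq_left hσ.le] at h

/-- Scaling estimate for `D_λφ(x) = φ(λx)`, `λ > 1`, for Schwartz `φ` whose Fourier transform is
supported in `{|ξ|₁ ≥ ε₀}`: if `σ ≤ 0` then `‖D_λφ‖_{E^s_σ} ≤ λ^{-d/2} 2^{s(λ-1)ε₀} ‖φ‖_{E^s_σ}`,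
and if `σ > 0` then `‖D_λφ‖_{E^s_σ} ≤ λ^{-d/2+σ} 2^{s(λ-1)ε₀} ‖φ‖_{E^s_σ}`. -/
theorem stmt_1 (d : ℕ) (hd : 1 ≤ d) (s σ ε₀ : ℝ) (hs : s ≤ 0) (hε : 0 < ε₀)
    (φ : SchwartzMap (EuclideanSpace ℝ (Fin d)) ℂ)
    (hsupp : Function.support (𝓕 ⇑φ) ⊆ {ξ : EuclideanSpace ℝ (Fin d) | ε₀ ≤ ∑ i, |ξ i|})
    (lam : ℝ) (hlam : 1 < lam) :
    (σ ≤ 0 → Enorm d s σ (fun x => φ (lam • x)) ≤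
      lam ^ (-(d : ℝ) / 2) * (2 : ℝ) ^ (s * (lam - 1) * ε₀) * Enorm d s σ ⇑φ) ∧
    (0 < σ → Enorm d s σ (fun x => φ (lam • x)) ≤
      lam ^ (-(d : ℝ) / 2 + σ) * (2 : ℝ) ^ (s * (lam - 1) * ε₀) * Enorm d s σ ⇑φ) :=
  stmt_1_general d s σ ε₀ hs φ hsupp lam hlam
end

section
/- Let α ∈ ℝ and let u : ℝ → 𝒮(ℝ;ℂ) be a continuously differentiable curve in the Schwartz space, written u(t,x), which solves the nonlocal derivative NLS: for all (t,x), i∂ₜu(t,x) + ∂ₓ²u(t,x) + α u(t,x) u*(t,x) ∂ₓu(t,x) = 0, where u*(t,x) := conj(u(t,−x)). Then for all (t,x), ∂ₜ(u u*)(t,x) = i ∂ₓ[ ∂ₓu · u* − ∂ₓ(u*) · u + (α/2)(u u*)² ](t,x). -/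
/-!
Differentiating `u u*` in time and inserting the equation at `x` and, conjugated, at `-x` gives
`∂ₜ(u u*) = i (∂ₓ²u · u* − ∂ₓ²(u*) · u) + iα (u u*)(∂ₓu · u* + u · ∂ₓ(u*))`.
The first bracket is the derivative of `∂ₓu · u* − ∂ₓ(u*) · u`, because the cross terms
`∂ₓu · ∂ₓ(u*)` cancel, and the second is `α/2` times the derivative of `(u u*)²`.
-/

open ComplexConjugate

namespace NonlocalNLS

/-- The nonlocal conjugate `f*` of the paper. -/
def reflConj (f : ℝ → ℂ) (x : ℝ) : ℂ := conj (f (-x))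

variable {f : ℝ → ℂ}

theorem hasDerivAt_reflConj {f' : ℂ} {x : ℝ} (hf : HasDerivAt f f' (-x)) :
    HasDerivAt (reflConj f) (-conj f') x := by
  have hneg : HasDerivAt (fun y => f (-y)) (-f') x := by
    simpa [Function.comp_def] using hf.scomp x (hasDerivAt_neg x)
  have hconj := hneg.star
  simp only [star_neg, Complex.star_def] at hconj
  exact hconj

theorem deriv_reflConj (hf : Differentiable ℝ f) : deriv (reflConj f) = -reflConj (deriv f) :=
  funext fun x => (hasDerivAt_reflConj (hf (-x)).hasDerivAt).deriv

theorem hasDerivAt_flux (a : ℂ) (hf : ContDiff ℝ 2 f) (x : ℝ) :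
    HasDerivAt (fun y => deriv f y * reflConj f y - deriv (reflConj f) y * f y
        + a / 2 * (f y * reflConj f y) ^ 2)
      (deriv (deriv f) x * reflConj f x - reflConj (deriv (deriv f)) x * f x
        + a * (f x * reflConj f x) * (deriv f x * reflConj f x - f x * reflConj (deriv f) x))
      x := by
  have hF : ∀ y, HasDerivAt f (deriv f y) y := fun y =>
    (hf.differentiable (by norm_num) y).hasDerivAt
  have hF' : ∀ y, HasDerivAt (deriv f) (deriv (deriv f) y) y := fun y =>
    (hf.differentiable_deriv_two y).hasDerivAt
  have hG : HasDerivAt (reflConj f) (-reflConj (deriv f) x) x := hasDerivAt_reflConj (hF (-x))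
  have hG' : HasDerivAt (-reflConj (deriv f)) (reflConj (deriv (deriv f)) x) x := by
    simpa [reflConj] using (hasDerivAt_reflConj (hF' (-x))).neg
  rw [deriv_reflConj (hf.differentiable (by norm_num))]
  refine (((hF' x).mul hG).sub (hG'.mul (hF x)) |>.add
    (((hF x).mul hG).pow 2 |>.const_mul (a / 2))).congr_deriv ?_
  simp only [Pi.mul_apply, Pi.neg_apply]
  ring

theorem hasDerivAt_mul_reflConj {v : ℝ → ℝ → ℂ} {w : ℝ → ℂ} {t x : ℝ}
    (hx : HasDerivAt (fun τ => v τ x) (w x) t) (hnx : HasDerivAt (fun τ => v τ (-x)) (w (-x)) t) :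
    HasDerivAt (fun τ => v τ x * reflConj (v τ) x) (w x * reflConj (v t) x + v t x * reflConj w x)
      t := by
  have hconj := hnx.star
  simp only [Complex.star_def] at hconj
  exact hx.mul hconj

end NonlocalNLS

open NonlocalNLS

theorem stmt_7_general (α : ℝ) (u ut : ℝ → SchwartzMap ℝ ℂ)
    (hderiv : ∀ t x : ℝ, HasDerivAt (fun τ => u τ x) (ut t x) t)
    (heq : ∀ t x : ℝ,
      Complex.I * ut t x + deriv (deriv (fun y => u t y)) x
        + (α : ℂ) * u t x * (starRingEnd ℂ) (u t (-x)) * deriv (fun y => u t y) x = 0) :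
    ∀ t x : ℝ,
      deriv (fun τ => u τ x * (starRingEnd ℂ) (u τ (-x))) t
        = Complex.I * deriv (fun y =>
            deriv (fun z => u t z) y * (starRingEnd ℂ) (u t (-y))
              - deriv (fun z => (starRingEnd ℂ) (u t (-z))) y * u t y
              + (α / 2 : ℂ) * (u t y * (starRingEnd ℂ) (u t (-y))) ^ 2) x := by
  intro t x
  have hut : ∀ y, ut t y = Complex.I * (deriv (deriv (u t)) y
      + α * u t y * conj (u t (-y)) * deriv (u t) y) := fun y => by
    linear_combination (-Complex.I) * heq t y + ut t y * Complex.I_mul_I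
  have hdens := hasDerivAt_mul_reflConj (hderiv t x) (hderiv t (-x))
  have hflux := hasDerivAt_flux (α : ℂ) ((u t).smooth 2) x
  unfold reflConj at hdens hflux
  rw [hdens.deriv, hflux.deriv, hut x, hut (-x)]
  simp only [neg_neg, map_add, map_mul, Complex.conj_I, Complex.conj_ofReal, Complex.conj_conj]
  ring

/-- If `u(t,·)` is a continuously differentiable curve of Schwartz functions (with time
derivative `ut`) solving the nonlocal derivative NLS `i uₜ + ∂ₓ²u + α u u* ∂ₓu = 0`, where
`u*(t,x) = conj(u(t,−x))`, then
`∂ₜ(u u*) = i ∂ₓ[∂ₓu · u* − ∂ₓ(u*) · u + (α/2)(u u*)²]`. -/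
theorem stmt_7 (α : ℝ) (u ut : ℝ → SchwartzMap ℝ ℂ)
    (hu : Continuous u) (hut : Continuous ut)
    (hderiv : ∀ t x : ℝ, HasDerivAt (fun τ => u τ x) (ut t x) t)
    (heq : ∀ t x : ℝ,
      Complex.I * ut t x + deriv (deriv (fun y => u t y)) x
        + (α : ℂ) * u t x * (starRingEnd ℂ) (u t (-x)) * deriv (fun y => u t y) x = 0) :
    ∀ t x : ℝ,
      deriv (fun τ => u τ x * (starRingEnd ℂ) (u τ (-x))) t
        = Complex.I * deriv (fun y =>
            deriv (fun z => u t z) y * (starRingEnd ℂ) (u t (-y))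
              - deriv (fun z => (starRingEnd ℂ) (u t (-z))) y * u t y
              + (α / 2 : ℂ) * (u t y * (starRingEnd ℂ) (u t (-y))) ^ 2) x :=
  stmt_7_general α u ut hderiv heq
end

section
/- Let σ > 0. There exists a constant C = C(σ) > 0 such that for all measurable functions f, g : ℝ → ℂ supported in [0, ∞) with ⟨·⟩^σ f and ⟨·⟩^σ g in L²(ℝ), one has for every ξ ∈ ℝ: |ξ|^σ |(f * g)(ξ)| ≤ C ( ‖⟨·⟩^σ f‖_{L²} ‖g‖_{L²} + ‖f‖_{L²} ‖⟨·⟩^σ g‖_{L²} ). -/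
open MeasureTheory Real

/-- Convolution of two functions on `ℝ`. -/
noncomputable def conv (f g : ℝ → ℂ) (x : ℝ) : ℂ := ∫ y : ℝ, f y * g (x - y)

/-! The weight is subadditive up to a constant: `|ξ|^σ ≤ 2^σ (⟨y⟩^σ + ⟨ξ - y⟩^σ)`, since one of
`|y|`, `|ξ - y|` is at least `|ξ|/2`. Hence `|ξ|^σ |f y| |g (ξ - y)|` is dominated by
`2^σ (|⟨y⟩^σ f y| |g (ξ - y)| + |f y| |⟨ξ - y⟩^σ g (ξ - y)|)`, and each of the two resulting
integrals is bounded by Cauchy–Schwarz and the translation invariance of Lebesgue measure. -/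

noncomputable def bracketRpow (σ t : ℝ) : ℝ := (1 + t ^ 2) ^ (σ / 2)

lemma bracketRpow_pos (σ t : ℝ) : 0 < bracketRpow σ t :=
  rpow_pos_of_pos (by positivity) _

lemma one_le_bracketRpow {σ : ℝ} (hσ : 0 ≤ σ) (t : ℝ) : 1 ≤ bracketRpow σ t :=
  one_le_rpow (by nlinarith [sq_nonneg t]) (by positivity)

lemma abs_rpow_le_bracketRpow {σ : ℝ} (hσ : 0 ≤ σ) (t : ℝ) : |t| ^ σ ≤ bracketRpow σ t := by
  have h : |t| ^ σ = (t ^ 2) ^ (σ / 2) := by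
    rw [← sq_abs, ← rpow_natCast, ← rpow_mul (abs_nonneg t)]
    norm_num [mul_div_cancel₀]
  rw [h]
  exact rpow_le_rpow (sq_nonneg t) (by linarith) (by positivity)

lemma abs_add_rpow_le {σ : ℝ} (hσ : 0 ≤ σ) (x y : ℝ) :
    |x + y| ^ σ ≤ 2 ^ σ * (|x| ^ σ + |y| ^ σ) := by
  have hmax : |x + y| ≤ 2 * max |x| |y| := by
    linarith [abs_add_le x y, le_max_left |x| |y|, le_max_right |x| |y|]
  have hmax_rpow : max |x| |y| ^ σ ≤ |x| ^ σ + |y| ^ σ := by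
    rcases max_choice |x| |y| with h | h <;> rw [h] <;> linarith [rpow_nonneg (abs_nonneg x) σ,
      rpow_nonneg (abs_nonneg y) σ]
  calc |x + y| ^ σ ≤ (2 * max |x| |y|) ^ σ := rpow_le_rpow (abs_nonneg _) hmax hσ
    _ = 2 ^ σ * max |x| |y| ^ σ := mul_rpow zero_le_two (le_max_of_le_left (abs_nonneg x))
    _ ≤ 2 ^ σ * (|x| ^ σ + |y| ^ σ) := by gcongr

lemma abs_rpow_le_bracketRpow_add {σ : ℝ} (hσ : 0 ≤ σ) (ξ y : ℝ) :
    |ξ| ^ σ ≤ 2 ^ σ * (bracketRpow σ y + bracketRpow σ (ξ - y)) := by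
  calc |ξ| ^ σ = |y + (ξ - y)| ^ σ := by rw [add_sub_cancel]
    _ ≤ 2 ^ σ * (|y| ^ σ + |ξ - y| ^ σ) := abs_add_rpow_le hσ y (ξ - y)
    _ ≤ 2 ^ σ * (bracketRpow σ y + bracketRpow σ (ξ - y)) := by
      gcongr <;> exact abs_rpow_le_bracketRpow hσ _

lemma norm_bracketRpow_mul (σ t : ℝ) (z : ℂ) :
    ‖(bracketRpow σ t : ℂ) * z‖ = bracketRpow σ t * ‖z‖ := by
  rw [norm_mul, Complex.norm_real, norm_of_nonneg (bracketRpow_pos σ t).le]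

lemma memLp_of_bracketRpow_mul {σ : ℝ} (hσ : 0 ≤ σ) {p : ENNReal} {μ : Measure ℝ} {f : ℝ → ℂ}
    (hf : AEStronglyMeasurable f μ)
    (h : MemLp (fun t => (bracketRpow σ t : ℂ) * f t) p μ) : MemLp f p μ :=
  h.of_le hf <| .of_forall fun t => by
    rw [norm_bracketRpow_mul]
    exact le_mul_of_one_le_left (norm_nonneg _) (one_le_bracketRpow hσ t)

section ConvolutionCauchySchwarz

variable {E : Type*} [NormedAddCommGroup E] {F G : ℝ → E}

lemma integrable_norm_mul_norm_sub (hF : MemLp F 2) (hG : MemLp G 2) (ξ : ℝ) :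
    Integrable (fun y => ‖F y‖ * ‖G (ξ - y)‖) :=
  hF.norm.integrable_mul
    ((hG.comp_measurePreserving (Measure.measurePreserving_sub_left volume ξ)).norm)

lemma integral_norm_mul_norm_sub_le (hF : MemLp F 2) (hG : MemLp G 2) (ξ : ℝ) :
    ∫ y, ‖F y‖ * ‖G (ξ - y)‖ ≤
      (∫ η, ‖F η‖ ^ 2) ^ (1 / 2 : ℝ) * (∫ η, ‖G η‖ ^ 2) ^ (1 / 2 : ℝ) := by
  have hGξ := hG.comp_measurePreserving (Measure.measurePreserving_sub_left volume ξ)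
  have := integral_mul_norm_le_Lp_mul_Lq HolderConjugate.two_two
    (by simpa using hF) (by simpa using hGξ)
  simpa only [rpow_two, Function.comp_apply, integral_sub_left_eq_self (fun η => ‖G η‖ ^ 2)] using this

end ConvolutionCauchySchwarz

lemma abs_rpow_mul_norm_mul_le {σ : ℝ} (hσ : 0 ≤ σ) (f g : ℝ → ℂ) (ξ y : ℝ) :
    |ξ| ^ σ * ‖f y * g (ξ - y)‖ ≤
      2 ^ σ * (‖(bracketRpow σ y : ℂ) * f y‖ * ‖g (ξ - y)‖
        + ‖f y‖ * ‖(bracketRpow σ (ξ - y) : ℂ) * g (ξ - y)‖) := by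
  rw [norm_mul, norm_bracketRpow_mul, norm_bracketRpow_mul]
  calc |ξ| ^ σ * (‖f y‖ * ‖g (ξ - y)‖)
      ≤ 2 ^ σ * (bracketRpow σ y + bracketRpow σ (ξ - y)) * (‖f y‖ * ‖g (ξ - y)‖) := by
        gcongr
        exact abs_rpow_le_bracketRpow_add hσ ξ y
    _ = _ := by ring

lemma abs_rpow_mul_norm_conv_le {σ : ℝ} (hσ : 0 ≤ σ) {f g : ℝ → ℂ}
    (hf : MemLp f 2) (hg : MemLp g 2)
    (hF : MemLp (fun t => (bracketRpow σ t : ℂ) * f t) 2)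
    (hG : MemLp (fun t => (bracketRpow σ t : ℂ) * g t) 2) (ξ : ℝ) :
    |ξ| ^ σ * ‖conv f g ξ‖ ≤
      2 ^ σ * ((∫ η, ‖(bracketRpow σ η : ℂ) * f η‖ ^ 2) ^ (1 / 2 : ℝ)
          * (∫ η, ‖g η‖ ^ 2) ^ (1 / 2 : ℝ)
        + (∫ η, ‖f η‖ ^ 2) ^ (1 / 2 : ℝ)
          * (∫ η, ‖(bracketRpow σ η : ℂ) * g η‖ ^ 2) ^ (1 / 2 : ℝ)) := by
  have hA := integrable_norm_mul_norm_sub hF hg ξ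
  have hB := integrable_norm_mul_norm_sub hf hG ξ
  calc |ξ| ^ σ * ‖conv f g ξ‖
      ≤ ∫ y, |ξ| ^ σ * ‖f y * g (ξ - y)‖ := by
        rw [integral_const_mul]
        gcongr
        exact norm_integral_le_integral_norm _
    _ ≤ ∫ y, 2 ^ σ * (‖(bracketRpow σ y : ℂ) * f y‖ * ‖g (ξ - y)‖
          + ‖f y‖ * ‖(bracketRpow σ (ξ - y) : ℂ) * g (ξ - y)‖) :=
        integral_mono_of_nonneg (.of_forall fun y => by positivity) ((hA.add hB).const_mul _)
          (.of_forall (abs_rpow_mul_norm_mul_le hσ f g ξ))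
    _ = 2 ^ σ * ((∫ y, ‖(bracketRpow σ y : ℂ) * f y‖ * ‖g (ξ - y)‖)
          + ∫ y, ‖f y‖ * ‖(bracketRpow σ (ξ - y) : ℂ) * g (ξ - y)‖) := by
        rw [integral_const_mul, integral_add hA hB]
    _ ≤ _ := by
        gcongr
        · exact integral_norm_mul_norm_sub_le hF hg ξ
        · exact integral_norm_mul_norm_sub_le hf hG ξ

/-- Weighted convolution bound: for `σ > 0` there is `C > 0` such that for all measurable
`f, g` supported in `[0,∞)` with `⟨·⟩^σ f, ⟨·⟩^σ g ∈ L²`, one has for every `ξ`: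
`|ξ|^σ |(f*g)(ξ)| ≤ C (‖⟨·⟩^σ f‖_{L²} ‖g‖_{L²} + ‖f‖_{L²} ‖⟨·⟩^σ g‖_{L²})`,
where `⟨ξ⟩^σ = (1+ξ²)^{σ/2}`. -/
theorem stmt_13 (σ : ℝ) (hσ : 0 < σ) :
    ∃ C > 0, ∀ f g : ℝ → ℂ, Measurable f → Measurable g →
      Function.support f ⊆ Set.Ici 0 → Function.support g ⊆ Set.Ici 0 →
      MemLp (fun ξ : ℝ => (((1 + ξ ^ 2) ^ (σ / 2) : ℝ) : ℂ) * f ξ) 2 volume →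
      MemLp (fun ξ : ℝ => (((1 + ξ ^ 2) ^ (σ / 2) : ℝ) : ℂ) * g ξ) 2 volume →
      ∀ ξ : ℝ, |ξ| ^ σ * ‖conv f g ξ‖ ≤
        C * ((∫ η : ℝ, ‖(((1 + η ^ 2) ^ (σ / 2) : ℝ) : ℂ) * f η‖ ^ 2) ^ (1 / 2 : ℝ)
                * (∫ η : ℝ, ‖g η‖ ^ 2) ^ (1 / 2 : ℝ)
              + (∫ η : ℝ, ‖f η‖ ^ 2) ^ (1 / 2 : ℝ)
                * (∫ η : ℝ, ‖(((1 + η ^ 2) ^ (σ / 2) : ℝ) : ℂ) * g η‖ ^ 2) ^ (1 / 2 : ℝ)) := by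
  refine ⟨2 ^ σ, by positivity, fun f g hfm hgm _ _ hF hG ξ => ?_⟩
  exact abs_rpow_mul_norm_conv_le hσ.le
    (memLp_of_bracketRpow_mul hσ.le hfm.aestronglyMeasurable hF)
    (memLp_of_bracketRpow_mul hσ.le hgm.aestronglyMeasurable hG) hF hG ξ
end

section
/- Let α ∈ ℝ and let u : ℝ → 𝒮(ℝ;ℂ) be a continuously differentiable curve in the Schwartz space, written u(t,x), which solves the nonlocal NLS: for all (t,x), i∂ₜu(t,x) + ∂ₓ²u(t,x) + α u(t,x)² conj(u(t,−x)) = 0. Then the energy E(t) := ∫_ℝ [ ∂ₓu(t,x) · conj(∂ₓu(t,−x)) + (α/2) u(t,x)² · conj(u(t,−x))² ] dx is constant in t: E(t) = E(0) for all t. -/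
/-!
Write `f*(x) = conj (f (-x))`. Differentiating under the integral sign (legitimate because the
Schwartz curves decay like `(1 + x²)⁻¹` uniformly on compact time intervals), with `φ = u t` and
`ψ = ∂ₜu t` one gets `E' = ∫ ψ' φ'* + φ' ψ'* + α φ ψ (φ*)² + α φ² φ* ψ*`. Since `(g*)' = -(g')*`,
integration by parts moves a derivative across the pairing `∫ f g*` without a sign, so the
kinetic part equals `∫ ψ φ''* + φ'' ψ*`. Substituting `φ'' = -i ψ - α φ² φ*` (and its
reflection) the `i ψ ψ*` terms cancel and the rest cancels the potential part pointwise.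
-/

open MeasureTheory Filter Metric ComplexConjugate
open scoped SchwartzMap

namespace NonlocalNLS

noncomputable section

section Decay

variable {F : Type*} [NormedAddCommGroup F] [NormedSpace ℝ F]

lemma continuous_schwartzMap_apply (x : ℝ) : Continuous fun f : 𝓢(ℝ, F) => f x :=
  (continuous_eval_const (F := BoundedContinuousFunction ℝ F) x).comp
    (SchwartzMap.toBoundedContinuousFunctionCLM ℝ ℝ F).continuous

lemma norm_apply_le_mul_inv_one_add_sq (f : 𝓢(ℝ, F)) (x : ℝ) :
    ‖f x‖ ≤ (SchwartzMap.seminorm ℝ 0 0 f + SchwartzMap.seminorm ℝ 2 0 f) * (1 + x ^ 2)⁻¹ := by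
  rw [le_mul_inv_iff₀ (by positivity)]
  have h₀ := f.norm_le_seminorm ℝ x
  have h₂ := f.norm_pow_mul_le_seminorm ℝ 2 x
  rw [Real.norm_eq_abs, sq_abs] at h₂
  linarith

lemma eventually_forall_norm_apply_le {f : ℝ → 𝓢(ℝ, F)} (hf : Continuous f) {K : Set ℝ}
    (hK : IsCompact K) :
    ∀ᶠ C in atTop, ∀ τ ∈ K, ∀ x, ‖f τ x‖ ≤ C * (1 + x ^ 2)⁻¹ := by
  have hcont : Continuous fun τ =>
      SchwartzMap.seminorm ℝ 0 0 (f τ) + SchwartzMap.seminorm ℝ 2 0 (f τ) :=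
    (((schwartz_withSeminorms ℝ ℝ F).continuous_seminorm (0, 0)).add
      ((schwartz_withSeminorms ℝ ℝ F).continuous_seminorm (2, 0))).comp hf
  obtain ⟨C, hC⟩ := hK.exists_bound_of_continuousOn hcont.continuousOn
  filter_upwards [eventually_ge_atTop C] with C' hC' τ hτ x
  calc ‖f τ x‖ ≤ _ := norm_apply_le_mul_inv_one_add_sq (f τ) x
    _ ≤ C' * (1 + x ^ 2)⁻¹ := by
      gcongr
      exact (le_abs_self _).trans ((hC τ hτ).trans hC')

variable [CompleteSpace F]

theorem hasDerivAt_deriv_apply {u ut : ℝ → 𝓢(ℝ, F)} (hut : Continuous ut)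
    (hderiv : ∀ t x, HasDerivAt (fun τ => u τ x) (ut t x) t) (t x : ℝ) :
    HasDerivAt (fun τ => deriv (u τ) x) (deriv (ut t) x) t := by
  -- `u τ = u 0 + ∫₀^τ ut`; differentiate in `x` under this integral, then in `τ`
  have hcont (y : ℝ) : Continuous fun s => ut s y := (continuous_schwartzMap_apply y).comp hut
  have hcont' (y : ℝ) : Continuous fun s => deriv (ut s) y :=
    (continuous_schwartzMap_apply y).comp ((SchwartzMap.derivCLM ℝ F).continuous.comp hut)
  have hsup : Continuous fun s => SchwartzMap.seminorm ℝ 0 0 (SchwartzMap.derivCLM ℝ F (ut s)) :=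
    ((schwartz_withSeminorms ℝ ℝ F).continuous_seminorm (0, 0)).comp
      ((SchwartzMap.derivCLM ℝ F).continuous.comp hut)
  have hu_eq (τ : ℝ) : ⇑(u τ) = fun y => u 0 y + ∫ s in 0..τ, ut s y := by
    funext y
    rw [intervalIntegral.integral_eq_sub_of_hasDerivAt (fun s _ => hderiv s y)
      ((hcont y).intervalIntegrable 0 τ)]
    abel
  have hdiff (τ : ℝ) : HasDerivAt (fun y => ∫ s in 0..τ, ut s y)
      (∫ s in 0..τ, deriv (ut s) x) x :=
    (intervalIntegral.hasDerivAt_integral_of_dominated_loc_of_deriv_le (ball_mem_nhds x one_pos)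
      (Eventually.of_forall fun y => (hcont y).aestronglyMeasurable.restrict)
      ((hcont x).intervalIntegrable 0 τ) (hcont' x).aestronglyMeasurable.restrict
      (ae_of_all _ fun s _ y _ => (SchwartzMap.derivCLM ℝ F (ut s)).norm_le_seminorm ℝ y)
      (hsup.intervalIntegrable 0 τ)
      (ae_of_all _ fun s _ y _ => (ut s).hasDerivAt y)).2
  have hderiv_eq (τ : ℝ) : deriv (u τ) x = deriv (u 0) x + ∫ s in 0..τ, deriv (ut s) x := by
    rw [hu_eq τ]
    exact (((u 0).hasDerivAt x).add (hdiff τ)).deriv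
  rw [funext hderiv_eq]
  exact ((hcont' x).integral_hasStrictDerivAt 0 t).hasDerivAt.const_add _

end Decay

section Reflection

def conjNeg (f : 𝓢(ℝ, ℂ)) : 𝓢(ℝ, ℂ) :=
  SchwartzMap.compCLMOfContinuousLinearEquiv ℝ (ContinuousLinearEquiv.neg ℝ)
    (SchwartzMap.postcompCLM Complex.conjCLE.toContinuousLinearMap f)

@[simp]
lemma conjNeg_apply (f : 𝓢(ℝ, ℂ)) (x : ℝ) : conjNeg f x = conj (f (-x)) := rfl

lemma hasDerivAt_conjNeg (f : 𝓢(ℝ, ℂ)) (x : ℝ) :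
    HasDerivAt (conjNeg f) (-conj (deriv f (-x))) x := by
  have h := ((f.hasDerivAt (-x)).scomp x (hasDerivAt_neg x)).star
  simp only [Function.comp_def, neg_smul, one_smul, star_neg] at h
  exact h

lemma integrable_mul_conj_neg (f g : 𝓢(ℝ, ℂ)) :
    Integrable fun x => f x * conj (g (-x)) :=
  (SchwartzMap.pairing (ContinuousLinearMap.mul ℝ ℂ) f (conjNeg g)).integrable

theorem integral_deriv_mul_conj_neg (f g : 𝓢(ℝ, ℂ)) :
    ∫ x, deriv f x * conj (g (-x)) = ∫ x, f x * conj (deriv g (-x)) := by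
  have h := SchwartzMap.integral_mul_deriv_eq_neg_deriv_mul f (conjNeg g)
  simp only [fun x => (hasDerivAt_conjNeg g x).deriv, conjNeg_apply, mul_neg,
    integral_neg, neg_inj] at h
  exact h.symm

end Reflection

section Energy

variable (α : ℝ)

def energyDensity (φ : 𝓢(ℝ, ℂ)) (x : ℝ) : ℂ :=
  deriv φ x * conj (deriv φ (-x)) + (α / 2 : ℂ) * φ x ^ 2 * conj (φ (-x)) ^ 2

/-- The derivative of `energyDensity α` at `φ` in the direction `ψ`. -/
def energyDensityDeriv (φ ψ : 𝓢(ℝ, ℂ)) (x : ℝ) : ℂ :=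
  deriv ψ x * conj (deriv φ (-x)) + deriv φ x * conj (deriv ψ (-x))
    + α * (φ x * ψ x) * conj (φ (-x)) ^ 2 + α * φ x ^ 2 * (conj (φ (-x)) * conj (ψ (-x)))

lemma integrable_energyDensity (φ : 𝓢(ℝ, ℂ)) : Integrable (energyDensity α φ) := by
  let φsq := SchwartzMap.pairing (ContinuousLinearMap.mul ℝ ℂ) φ φ
  refine ((integrable_mul_conj_neg (SchwartzMap.derivCLM ℝ ℂ φ) (SchwartzMap.derivCLM ℝ ℂ φ)).add
    ((integrable_mul_conj_neg φsq φsq).const_mul (α / 2 : ℂ))).congr (ae_of_all _ fun x => ?_)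
  simp [energyDensity, φsq, sq]
  ring

lemma continuous_energyDensityDeriv (φ ψ : 𝓢(ℝ, ℂ)) : Continuous (energyDensityDeriv α φ ψ) := by
  have h (f : 𝓢(ℝ, ℂ)) : Continuous fun x => conj (f (-x)) := (conjNeg f).continuous
  have hd (f : 𝓢(ℝ, ℂ)) : Continuous (deriv f) := (SchwartzMap.derivCLM ℝ ℂ f).continuous
  unfold energyDensityDeriv
  fun_prop

lemma norm_energyDensityDeriv_le {φ ψ : 𝓢(ℝ, ℂ)} {M : ℝ}
    (hφ : ∀ y, ‖φ y‖ ≤ M * (1 + y ^ 2)⁻¹) (hψ : ∀ y, ‖ψ y‖ ≤ M * (1 + y ^ 2)⁻¹)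
    (hφ' : ∀ y, ‖deriv φ y‖ ≤ M * (1 + y ^ 2)⁻¹) (hψ' : ∀ y, ‖deriv ψ y‖ ≤ M * (1 + y ^ 2)⁻¹)
    (x : ℝ) :
    ‖energyDensityDeriv α φ ψ x‖ ≤ (2 * M ^ 2 + 2 * |α| * M ^ 4) * (1 + x ^ 2)⁻¹ := by
  set w := (1 + x ^ 2)⁻¹
  have hw₀ : 0 ≤ w := by positivity
  have hw₁ : w ≤ 1 := inv_le_one_of_one_le₀ (by nlinarith)
  have hM : 0 ≤ M := nonneg_of_mul_nonneg_left ((norm_nonneg _).trans (hφ 0)) (by positivity)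
  have at_neg {f : ℝ → ℂ} (hf : ∀ y, ‖f y‖ ≤ M * (1 + y ^ 2)⁻¹) : ‖conj (f (-x))‖ ≤ M * w := by
    simpa [neg_sq] using hf (-x)
  have := hφ x; have := hψ x; have := hφ' x; have := hψ' x
  have := at_neg hφ; have := at_neg hψ; have := at_neg hφ'; have := at_neg hψ'
  unfold energyDensityDeriv
  calc _ ≤ _ := norm_add₄_le
    _ ≤ (M * w) * (M * w) + (M * w) * (M * w) + |α| * ((M * w) * (M * w)) * (M * w) ^ 2
          + |α| * (M * w) ^ 2 * ((M * w) * (M * w)) := by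
      simp only [norm_mul, norm_pow, Complex.norm_real, Real.norm_eq_abs]
      gcongr
    _ = 2 * M ^ 2 * w ^ 2 + 2 * |α| * M ^ 4 * w ^ 4 := by ring
    _ ≤ 2 * M ^ 2 * w + 2 * |α| * M ^ 4 * w := by
      gcongr <;> exact pow_le_of_le_one hw₀ hw₁ (by norm_num)
    _ = _ := by ring

theorem integral_energyDensityDeriv_eq_zero {φ ψ : 𝓢(ℝ, ℂ)}
    (heq : ∀ x, Complex.I * ψ x + deriv (deriv φ) x + α * φ x ^ 2 * conj (φ (-x)) = 0) :
    ∫ x, energyDensityDeriv α φ ψ x = 0 := by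
  have hcoe (f : 𝓢(ℝ, ℂ)) : ⇑(SchwartzMap.derivCLM ℝ ℂ f) = deriv f := rfl
  set φ' := SchwartzMap.derivCLM ℝ ℂ φ
  set ψ' := SchwartzMap.derivCLM ℝ ℂ ψ
  set φ'' := SchwartzMap.derivCLM ℝ ℂ φ'
  -- the equation at `x` and (conjugated) at `-x` turn the potential terms into kinetic ones
  have hpoint (x : ℝ) : energyDensityDeriv α φ ψ x =
      (ψ' x * conj (φ' (-x)) - ψ x * conj (φ'' (-x)))
        + (φ' x * conj (ψ' (-x)) - φ'' x * conj (ψ (-x))) := by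
    have h := heq x
    have h' := congrArg conj (heq (-x))
    simp only [map_add, map_mul, map_pow, map_zero, Complex.conj_I, Complex.conj_ofReal,
      Complex.conj_conj, neg_neg] at h'
    simp only [energyDensityDeriv, φ', ψ', φ'', hcoe]
    linear_combination ψ x * h' + conj (ψ (-x)) * h
  have hψ : Integrable fun x => ψ' x * conj (φ' (-x)) - ψ x * conj (φ'' (-x)) :=
    (integrable_mul_conj_neg ψ' φ').sub (integrable_mul_conj_neg ψ φ'')
  have hφ : Integrable fun x => φ' x * conj (ψ' (-x)) - φ'' x * conj (ψ (-x)) :=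
    (integrable_mul_conj_neg φ' ψ').sub (integrable_mul_conj_neg φ'' ψ)
  simp only [hpoint]
  rw [integral_add hψ hφ,
    integral_sub (integrable_mul_conj_neg ψ' φ') (integrable_mul_conj_neg ψ φ''),
    integral_sub (integrable_mul_conj_neg φ' ψ') (integrable_mul_conj_neg φ'' ψ)]
  have hψ' : ∫ x, ψ' x * conj (φ' (-x)) = ∫ x, ψ x * conj (φ'' (-x)) :=
    integral_deriv_mul_conj_neg ψ φ'
  have hφ' : ∫ x, φ' x * conj (ψ' (-x)) = ∫ x, φ'' x * conj (ψ (-x)) :=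
    (integral_deriv_mul_conj_neg φ' ψ).symm
  rw [hψ', hφ', sub_self, sub_self, add_zero]

variable {u ut : ℝ → 𝓢(ℝ, ℂ)}

lemma hasDerivAt_energyDensity (hut : Continuous ut)
    (hderiv : ∀ t x, HasDerivAt (fun τ => u τ x) (ut t x) t) (t x : ℝ) :
    HasDerivAt (fun τ => energyDensity α (u τ) x) (energyDensityDeriv α (u t) (ut t) x) t := by
  have hconj {f : ℝ → ℂ} {f' : ℂ} (hf : HasDerivAt f f' t) :
      HasDerivAt (fun τ => conj (f τ)) (conj f') t := hf.star
  have hD := hasDerivAt_deriv_apply hut hderiv t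
  have hu := hderiv t
  have h := ((hD x).mul (hconj (hD (-x)))).add
    (((hu x).pow 2).const_mul (α / 2 : ℂ) |>.mul ((hconj (hu (-x))).pow 2))
  refine h.congr_deriv ?_
  simp only [energyDensityDeriv, Pi.pow_apply]
  ring

theorem hasDerivAt_integral_energyDensity (hu : Continuous u) (hut : Continuous ut)
    (hderiv : ∀ t x, HasDerivAt (fun τ => u τ x) (ut t x) t) (t₀ : ℝ) :
    HasDerivAt (fun t => ∫ x, energyDensity α (u t) x)
      (∫ x, energyDensityDeriv α (u t₀) (ut t₀) x) t₀ := by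
  have hD := (SchwartzMap.derivCLM ℝ ℂ).continuous
  have hK := isCompact_closedBall t₀ 1
  obtain ⟨M, hMu, hMut, hMu', hMut'⟩ := ((eventually_forall_norm_apply_le hu hK).and
    ((eventually_forall_norm_apply_le hut hK).and
    ((eventually_forall_norm_apply_le (hD.comp hu) hK).and
    (eventually_forall_norm_apply_le (hD.comp hut) hK)))).exists
  have hbound (t : ℝ) (ht : t ∈ ball t₀ 1) (x : ℝ) :
      ‖energyDensityDeriv α (u t) (ut t) x‖ ≤ (2 * M ^ 2 + 2 * |α| * M ^ 4) * (1 + x ^ 2)⁻¹ :=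
    have ht := ball_subset_closedBall ht
    norm_energyDensityDeriv_le α (hMu t ht) (hMut t ht) (hMu' t ht) (hMut' t ht) x
  exact (hasDerivAt_integral_of_dominated_loc_of_deriv_le (ball_mem_nhds t₀ one_pos)
    (Eventually.of_forall fun t => (integrable_energyDensity α (u t)).aestronglyMeasurable)
    (integrable_energyDensity α (u t₀))
    (continuous_energyDensityDeriv α (u t₀) (ut t₀)).aestronglyMeasurable
    (ae_of_all _ fun x t ht => hbound t ht x) (integrable_inv_one_add_sq.const_mul _)
    (ae_of_all _ fun x t _ => hasDerivAt_energyDensity α hut hderiv t x)).2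

end Energy

end

end NonlocalNLS

open NonlocalNLS

/-- Energy conservation for the nonlocal NLS: if `u(t,·)` is a continuously differentiable
curve of Schwartz functions (with time derivative `ut`) solving `i uₜ + ∂ₓ²u + α u² u* = 0`,
where `u*(t,x) = conj(u(t,−x))`, then
`E(t) = ∫ [∂ₓu(t,x) conj(∂ₓu(t,−x)) + (α/2) u(t,x)² conj(u(t,−x))²] dx` is constant. -/
theorem stmt_18 (α : ℝ) (u ut : ℝ → SchwartzMap ℝ ℂ)
    (hu : Continuous u) (hut : Continuous ut)
    (hderiv : ∀ t x : ℝ, HasDerivAt (fun τ => u τ x) (ut t x) t)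
    (heq : ∀ t x : ℝ,
      Complex.I * ut t x + deriv (deriv (fun y => u t y)) x
        + (α : ℂ) * (u t x) ^ 2 * (starRingEnd ℂ) (u t (-x)) = 0) :
    ∀ t : ℝ,
      (∫ x : ℝ, deriv (fun y => u t y) x * (starRingEnd ℂ) (deriv (fun y => u t y) (-x))
          + (α / 2 : ℂ) * (u t x) ^ 2 * ((starRingEnd ℂ) (u t (-x))) ^ 2)
        = ∫ x : ℝ, deriv (fun y => u 0 y) x * (starRingEnd ℂ) (deriv (fun y => u 0 y) (-x))
          + (α / 2 : ℂ) * (u 0 x) ^ 2 * ((starRingEnd ℂ) (u 0 (-x))) ^ 2 := by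
  have hE (t : ℝ) : HasDerivAt (fun t => ∫ x, energyDensity α (u t) x) 0 t := by
    simpa only [integral_energyDensityDeriv_eq_zero α (heq t)] using
      hasDerivAt_integral_energyDensity α hu hut hderiv t
  exact fun t => is_const_of_deriv_eq_zero (fun t => (hE t).differentiableAt)
    (fun t => (hE t).deriv) t 0
end

section
/- Let α ∈ ℝ and let u : ℝ → 𝒮(ℝ;ℂ) be a continuously differentiable curve in the Schwartz space, written u(t,x), which solves the nonlocal derivative NLS: for all (t,x), i∂ₜu(t,x) + ∂ₓ²u(t,x) + α u(t,x) conj(u(t,−x)) ∂ₓu(t,x) = 0. Then the mass M(t) := ∫_ℝ u(t,x) · conj(u(t,−x)) dx is constant in t: M(t) = M(0) for all t. -/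
/-!
Writing `f*(x) = conj (f (-x))`, a solution satisfies the local conservation law
`∂ₜ(u u*) = i ∂ₓ[∂ₓu · u* − ∂ₓ(u*) · u + (α/2)(u u*)²]`, obtained by eliminating `∂ₜu` and
`∂ₜ(u*)` with the equation at `x` and the conjugated equation at `-x`. The bracket is again a
Schwartz function, so its derivative integrates to zero. Differentiating the mass under the
integral sign, justified by domination by `C (1 + x²)⁻¹` locally uniformly in time, shows that
`M' = 0`.
-/

open MeasureTheory SchwartzMap ComplexConjugate

namespace SchwartzMap

variable {F : Type*} [NormedAddCommGroup F] [NormedSpace ℝ F]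

theorem coe_derivCLM (f : 𝓢(ℝ, F)) : ⇑(derivCLM ℝ F f) = deriv f :=
  rfl

theorem integral_deriv_eq_zero (f : 𝓢(ℝ, F)) : ∫ x, deriv f x = 0 :=
  integral_eq_zero_of_hasDerivAt_of_integrable f.hasDerivAt (derivCLM ℝ F f).integrable
    f.integrable

theorem norm_le_mul_inv_one_add_sq (f : 𝓢(ℝ, F)) (x : ℝ) :
    ‖f x‖ ≤ (SchwartzMap.seminorm ℝ 0 0 f + SchwartzMap.seminorm ℝ 2 0 f) * (1 + x ^ 2)⁻¹ := by
  have h0 := norm_le_seminorm ℝ f x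
  have h2 := norm_pow_mul_le_seminorm ℝ f 2 x
  rw [Real.norm_eq_abs, sq_abs] at h2
  rw [le_mul_inv_iff₀ (by positivity)]
  linarith

theorem exists_norm_le_mul_inv_one_add_sq_of_continuous {w : ℝ → 𝓢(ℝ, F)} (hw : Continuous w)
    {K : Set ℝ} (hK : IsCompact K) :
    ∃ C, 0 ≤ C ∧ ∀ s ∈ K, ∀ x, ‖w s x‖ ≤ C * (1 + x ^ 2)⁻¹ := by
  have hp : Continuous fun s =>
      SchwartzMap.seminorm ℝ 0 0 (w s) + SchwartzMap.seminorm ℝ 2 0 (w s) :=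
    (((schwartz_withSeminorms ℝ ℝ F).continuous_seminorm (0, 0)).comp hw).add
      (((schwartz_withSeminorms ℝ ℝ F).continuous_seminorm (2, 0)).comp hw)
  obtain ⟨C, hC⟩ := hK.exists_bound_of_continuousOn hp.continuousOn
  refine ⟨max C 0, le_max_right _ _, fun s hs x => (norm_le_mul_inv_one_add_sq (w s) x).trans ?_⟩
  gcongr
  exact (le_abs_self _).trans ((hC s hs).trans (le_max_left _ _))

noncomputable def mul (f g : 𝓢(ℝ, ℂ)) : 𝓢(ℝ, ℂ) :=
  pairing (ContinuousLinearMap.mul ℂ ℂ) f g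

@[simp]
theorem mul_apply (f g : 𝓢(ℝ, ℂ)) (x : ℝ) : mul f g x = f x * g x :=
  rfl

noncomputable def reflConj : 𝓢(ℝ, ℂ) →L[ℝ] 𝓢(ℝ, ℂ) :=
  (postcompCLM Complex.conjCLE.toContinuousLinearMap).comp
    (compCLMOfContinuousLinearEquiv ℝ (ContinuousLinearEquiv.neg ℝ))

@[simp]
theorem reflConj_apply (f : 𝓢(ℝ, ℂ)) (x : ℝ) : reflConj f x = conj (f (-x)) :=
  rfl

theorem hasDerivAt_reflConj (f : 𝓢(ℝ, ℂ)) (x : ℝ) :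
    HasDerivAt (reflConj f) (-reflConj (derivCLM ℝ ℂ f) x) x := by
  have h := ((f.hasDerivAt (-x)).scomp x (hasDerivAt_neg x)).star
  rw [neg_one_smul, star_neg] at h
  exact h

theorem derivCLM_reflConj (f : 𝓢(ℝ, ℂ)) :
    derivCLM ℝ ℂ (reflConj f) = -reflConj (derivCLM ℝ ℂ f) := by
  ext x
  exact (hasDerivAt_reflConj f x).deriv

theorem hasDerivAt_integral_mul {u v u' v' : ℝ → 𝓢(ℝ, ℂ)} (hu : Continuous u)
    (hv : Continuous v) (hu' : Continuous u') (hv' : Continuous v')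
    (hdu : ∀ t x, HasDerivAt (fun τ => u τ x) (u' t x) t)
    (hdv : ∀ t x, HasDerivAt (fun τ => v τ x) (v' t x) t) (t : ℝ) :
    HasDerivAt (fun τ => ∫ x, u τ x * v τ x) (∫ x, (u' t x * v t x + u t x * v' t x)) t := by
  have hK := isCompact_closedBall t 1
  obtain ⟨A, hA0, hA⟩ := exists_norm_le_mul_inv_one_add_sq_of_continuous hu hK
  obtain ⟨B, hB0, hB⟩ := exists_norm_le_mul_inv_one_add_sq_of_continuous hv hK
  obtain ⟨A', -, hA'⟩ := exists_norm_le_mul_inv_one_add_sq_of_continuous hu' hK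
  obtain ⟨B', -, hB'⟩ := exists_norm_le_mul_inv_one_add_sq_of_continuous hv' hK
  have hbound : ∀ x, ∀ s ∈ Metric.closedBall t 1,
      ‖u' s x * v s x + u s x * v' s x‖ ≤ (A' * B + A * B') * (1 + x ^ 2)⁻¹ := by
    intro x s hs
    have hr : (1 + x ^ 2)⁻¹ ≤ 1 := inv_le_one_of_one_le₀ (by nlinarith)
    have hu_le : ‖u s x‖ ≤ A := (hA s hs x).trans (mul_le_of_le_one_right hA0 hr)
    have hv_le : ‖v s x‖ ≤ B := (hB s hs x).trans (mul_le_of_le_one_right hB0 hr)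
    calc ‖u' s x * v s x + u s x * v' s x‖ ≤ ‖u' s x‖ * ‖v s x‖ + ‖u s x‖ * ‖v' s x‖ := by
          simpa only [norm_mul] using norm_add_le (u' s x * v s x) (u s x * v' s x)
      _ ≤ A' * (1 + x ^ 2)⁻¹ * B + A * (B' * (1 + x ^ 2)⁻¹) :=
          add_le_add
            (mul_le_mul (hA' s hs x) hv_le (norm_nonneg _) ((norm_nonneg _).trans (hA' s hs x)))
            (mul_le_mul hu_le (hB' s hs x) (norm_nonneg _) hA0)
      _ = (A' * B + A * B') * (1 + x ^ 2)⁻¹ := by ring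
  exact (hasDerivAt_integral_of_dominated_loc_of_deriv_le (Metric.closedBall_mem_nhds t one_pos)
    (.of_forall fun s => ((u s).continuous.mul (v s).continuous).aestronglyMeasurable)
    (mul (u t) (v t)).integrable
    (((u' t).continuous.mul (v t).continuous).add
      ((u t).continuous.mul (v' t).continuous)).aestronglyMeasurable
    (ae_of_all _ hbound) (integrable_inv_one_add_sq.const_mul _)
    (ae_of_all _ fun x s _ => (hdu s x).mul (hdv s x))).2

end SchwartzMap

namespace NdNLS

noncomputable def massFlux (α : ℝ) (f : 𝓢(ℝ, ℂ)) : 𝓢(ℝ, ℂ) :=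
  mul (derivCLM ℝ ℂ f) (reflConj f) - mul f (derivCLM ℝ ℂ (reflConj f))
    + ((α : ℂ) / 2) • mul (mul f (reflConj f)) (mul f (reflConj f))

theorem hasDerivAt_massFlux (α : ℝ) (f : 𝓢(ℝ, ℂ)) (x : ℝ) :
    HasDerivAt (massFlux α f)
      (deriv (deriv f) x * conj (f (-x)) - f x * conj (deriv (deriv f) (-x))
        + α * (f x * conj (f (-x))) * (deriv f x * conj (f (-x)) - f x * conj (deriv f (-x))))
      x := by
  have hf := f.hasDerivAt x
  have hf' := (derivCLM ℝ ℂ f).hasDerivAt x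
  have hr := hasDerivAt_reflConj f x
  have hr' := hasDerivAt_reflConj (derivCLM ℝ ℂ f) x
  have h := ((hf'.mul hr).add (hf.mul hr')).add
    (((hf.mul hr).mul (hf.mul hr)).const_mul ((α : ℂ) / 2))
  have hfun : ⇑(massFlux α f) = ⇑(derivCLM ℝ ℂ f) * ⇑(reflConj f)
      + ⇑f * ⇑(reflConj (derivCLM ℝ ℂ f))
      + fun y => (α : ℂ) / 2 * (⇑f * ⇑(reflConj f) * (⇑f * ⇑(reflConj f))) y := by
    ext y
    simp only [massFlux, derivCLM_reflConj, add_apply, sub_apply, smul_apply, mul_apply,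
      neg_apply, Pi.add_apply, Pi.mul_apply, smul_eq_mul]
    ring
  rw [hfun]
  refine h.congr_deriv ?_
  simp only [reflConj_apply, coe_derivCLM, Pi.mul_apply]
  ring

theorem mul_reflConj_add_mul_reflConj_eq_I_mul_deriv_massFlux (α : ℝ) (f w : 𝓢(ℝ, ℂ))
    (hw : ∀ x, Complex.I * w x + deriv (deriv f) x + α * f x * reflConj f x * deriv f x = 0)
    (x : ℝ) :
    w x * reflConj f x + f x * reflConj w x = Complex.I * deriv (massFlux α f) x := by
  have hconj := congrArg conj (hw (-x))
  simp only [reflConj_apply, map_add, map_mul, map_zero, Complex.conj_I, Complex.conj_ofReal,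
    Complex.conj_conj, neg_neg] at hconj hw ⊢
  rw [(hasDerivAt_massFlux α f x).deriv]
  linear_combination (-Complex.I * conj (f (-x))) * hw x + Complex.I * f x * hconj
    + (w x * conj (f (-x)) + f x * conj (w (-x))) * Complex.I_sq

theorem integral_mul_reflConj_add_mul_reflConj_eq_zero (α : ℝ) (f w : 𝓢(ℝ, ℂ))
    (hw : ∀ x, Complex.I * w x + deriv (deriv f) x + α * f x * reflConj f x * deriv f x = 0) :
    ∫ x, (w x * reflConj f x + f x * reflConj w x) = 0 := by
  simp_rw [mul_reflConj_add_mul_reflConj_eq_I_mul_deriv_massFlux α f w hw, integral_const_mul,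
    integral_deriv_eq_zero, mul_zero]

end NdNLS

/-- Mass conservation for the nonlocal derivative NLS: if `u(t,·)` is a continuously
differentiable curve of Schwartz functions (with time derivative `ut`) solving
`i uₜ + ∂ₓ²u + α u u* ∂ₓu = 0`, where `u*(t,x) = conj(u(t,−x))`, then
`M(t) = ∫ u(t,x) conj(u(t,−x)) dx` is constant. -/
theorem stmt_19 (α : ℝ) (u ut : ℝ → SchwartzMap ℝ ℂ)
    (hu : Continuous u) (hut : Continuous ut)
    (hderiv : ∀ t x : ℝ, HasDerivAt (fun τ => u τ x) (ut t x) t)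
    (heq : ∀ t x : ℝ,
      Complex.I * ut t x + deriv (deriv (fun y => u t y)) x
        + (α : ℂ) * u t x * (starRingEnd ℂ) (u t (-x)) * deriv (fun y => u t y) x = 0) :
    ∀ t : ℝ,
      (∫ x : ℝ, u t x * (starRingEnd ℂ) (u t (-x)))
        = ∫ x : ℝ, u 0 x * (starRingEnd ℂ) (u 0 (-x)) := by
  have hmass : ∀ t, HasDerivAt (fun τ => ∫ x, u τ x * reflConj (u τ) x) 0 t := fun t => by
    have h := hasDerivAt_integral_mul (v := fun τ => reflConj (u τ))
      (v' := fun τ => reflConj (ut τ)) hu (reflConj.continuous.comp hu) hut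
      (reflConj.continuous.comp hut) hderiv (fun t x => (hderiv t (-x)).star) t
    rwa [NdNLS.integral_mul_reflConj_add_mul_reflConj_eq_zero α (u t) (ut t) (heq t)] at h
  intro t
  exact is_const_of_deriv_eq_zero (fun s => (hmass s).differentiableAt)
    (fun s => (hmass s).deriv) t 0
end
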